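/- arXiv:cond-mat/0401540 — 4 statements merged into one kernel-verified Lean document; each statement's English description precedes it below -/
import Mathlib

section
/- Let f : ℝ → ℝ be an everywhere positive, differentiable probability density function on ℝ (f > 0 and ∫_ℝ f(x) dx = 1). Suppose that for every natural number n ≥ 1 and all x₁, ..., xₙ ∈ ℝ, the likelihood function L(θ) := ∏_{i=1}^n f(xᵢ − θ) attains its maximum over θ ∈ ℝ at θ* := (x₁ + ⋯ + xₙ)/n. Then there exists σ > 0 such that f(e) = (1/(√(2π) σ)) · exp(−e²/(2σ²)) for all e ∈ ℝ. -/
open MeasureTheory Real Set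

/-! Taking logarithms, the likelihood of a zero-sum sample `a, b, c` is maximal at `θ = 0`, so
Fermat's rule makes the score `φ = f' / f` satisfy `φ a + φ b + φ c = 0`; that is, `φ` is additive.
An additive function that is a derivative is linear: if `φ = (log f)'`, then
`x ↦ log f (x + b) - log f x - x φ b` has derivative zero, and comparing the resulting identity with
`a` and `b` swapped gives `a φ b = b φ a`. Hence `log f` is quadratic, `f` is a multiple of
`exp (-b x²)`, integrability forces `b > 0`, and the normalisation fixes the constant. -/

theorem hasDerivAt_log_comp_logDeriv {f : ℝ → ℝ} {x : ℝ} (hf : DifferentiableAt ℝ f x)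
    (hx : f x ≠ 0) : HasDerivAt (fun y => log (f y)) (logDeriv f x) x := by
  simpa [logDeriv_apply] using hf.hasDerivAt.log hx

theorem sum_logDeriv_eq_zero_of_isMaxOn_prod {ι : Type*} [Fintype ι] {f : ℝ → ℝ}
    (hpos : ∀ x, 0 < f x) (hdiff : Differentiable ℝ f) (y : ι → ℝ)
    (hmax : IsMaxOn (fun θ => ∏ i, f (y i - θ)) univ 0) :
    ∑ i, logDeriv f (y i) = 0 := by
  have hlogmax : IsLocalMax (fun θ => ∑ i, log (f (y i - θ))) 0 := by
    refine IsMaxOn.isLocalMax (fun θ _ => ?_) Filter.univ_mem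
    simp only [mem_ofPred_eq, ← log_prod fun i _ => (hpos _).ne']
    exact log_le_log (Finset.prod_pos fun i _ => hpos _) (hmax (mem_univ θ))
  have hderiv : HasDerivAt (fun θ => ∑ i, log (f (y i - θ))) (∑ i, -logDeriv f (y i)) 0 := by
    refine HasDerivAt.fun_sum fun i _ => HasDerivAt.comp_const_sub (f := fun x => log (f x)) (y i) 0
      (by simpa using hasDerivAt_log_comp_logDeriv (hdiff (y i)) (hpos (y i)).ne')
  simpa [Finset.sum_neg_distrib] using hlogmax.hasDerivAt_eq_zero hderiv

theorem map_add_of_map_add_add_eq_zero {G : Type*} [AddCommGroup G] {φ : G → ℝ}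
    (h : ∀ a b c, a + b + c = 0 → φ a + φ b + φ c = 0) (a b : G) :
    φ (a + b) = φ a + φ b := by
  have hzero := h 0 0 0 (by simp)
  have hneg := h (a + b) (-(a + b)) 0 (by simp)
  linarith [h a b (-(a + b)) (by abel)]

theorem eq_mul_map_one_of_hasDerivAt_of_map_add {g φ : ℝ → ℝ} (hg : ∀ x, HasDerivAt g (φ x) x)
    (hφ : ∀ a b, φ (a + b) = φ a + φ b) (a : ℝ) : φ a = a * φ 1 := by
  have hpolar : ∀ s b, g (s + b) - g s - g b + g 0 = s * φ b := by
    intro s b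
    have hH : ∀ x, HasDerivAt (fun x => g (x + b) - g x - x * φ b) 0 x := by
      intro x
      have hshift : HasDerivAt (fun x => g (x + b)) (φ (x + b)) x :=
        (hg (x + b)).comp_add_const x b
      have := (hshift.sub (hg x)).sub ((hasDerivAt_id x).mul_const (φ b))
      rwa [hφ, one_mul, add_sub_cancel_left, sub_self] at this
    have := is_const_of_deriv_eq_zero (fun x => (hH x).differentiableAt) (fun x => (hH x).deriv)
      s 0
    simp only [zero_add, zero_mul, sub_zero] at this
    linarith
  have hswap := hpolar 1 a
  rw [add_comm 1 a, one_mul] at hswap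
  linarith [hpolar a 1]

theorem eq_add_mul_sq_of_hasDerivAt {g : ℝ → ℝ} {c : ℝ} (hg : ∀ x, HasDerivAt g (c * x) x)
    (x : ℝ) : g x = g 0 + c / 2 * x ^ 2 := by
  have hK : ∀ y, HasDerivAt (fun y => g y - c / 2 * y ^ 2) 0 y := by
    intro y
    have hsq : HasDerivAt (fun y => c / 2 * y ^ 2) (c * y) y := by
      have := (hasDerivAt_pow 2 y).const_mul (c / 2)
      norm_num at this
      exact this.congr_deriv (by ring)
    have := (hg y).sub hsq
    rwa [sub_self] at this
  have := is_const_of_deriv_eq_zero (fun y => (hK y).differentiableAt) (fun y => (hK y).deriv)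
    x 0
  simp only [ne_eq, OfNat.ofNat_ne_zero, not_false_eq_true, zero_pow, mul_zero, sub_zero] at this
  linarith

theorem exists_gaussian_of_integral_mul_exp_eq_one {A b : ℝ}
    (h : ∫ x, A * exp (-b * x ^ 2) = 1) :
    ∃ σ : ℝ, 0 < σ ∧ ∀ e : ℝ,
      A * exp (-b * e ^ 2) = 1 / (√(2 * π) * σ) * exp (-e ^ 2 / (2 * σ ^ 2)) := by
  rw [integral_const_mul] at h
  have hb : 0 < b := integrable_exp_neg_mul_sq_iff.mp
    (Integrable.of_integral_ne_zero (right_ne_zero_of_mul_eq_one h))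
  rw [integral_gaussian] at h
  have hA : A = √(2 * b) / √(2 * π) := by
    rw [eq_div_iff (by positivity)]
    calc A * √(2 * π) = A * √(π / b) * √(2 * b) := by
          rw [mul_assoc, ← sqrt_mul (by positivity)]
          congr 2
          field_simp
      _ = √(2 * b) := by rw [h, one_mul]
  refine ⟨(√(2 * b))⁻¹, by positivity, fun e => ?_⟩
  rw [hA, inv_pow, sq_sqrt (by positivity)]
  congr 1
  · field_simp
  · congr 1
    field_simp

/-- **Gauss' law of error.** If an everywhere positive, differentiable probability
density `f` is such that, for every sample `x₁, …, xₙ`, the likelihood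
`θ ↦ ∏ i, f (xᵢ - θ)` is maximized at the arithmetic mean, then `f` is a Gaussian density. -/
theorem gauss_law_of_error (f : ℝ → ℝ)
    (hf_pos : ∀ x, 0 < f x) (hf_diff : Differentiable ℝ f)
    (hf_norm : ∫ x, f x = 1)
    (hmax : ∀ n : ℕ, 1 ≤ n → ∀ x : Fin n → ℝ, ∀ θ : ℝ,
      (∏ i, f (x i - θ)) ≤ ∏ i, f (x i - (∑ i, x i) / n)) :
    ∃ σ : ℝ, 0 < σ ∧ ∀ e : ℝ,
      f e = (1 / (Real.sqrt (2 * Real.pi) * σ)) * Real.exp (-e ^ 2 / (2 * σ ^ 2)) := by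
  have hscore : ∀ a b c : ℝ, a + b + c = 0 →
      logDeriv f a + logDeriv f b + logDeriv f c = 0 := by
    intro a b c habc
    have hmax3 : IsMaxOn (fun θ => ∏ i, f (![a, b, c] i - θ)) univ 0 := fun θ _ => by
      simpa [Fin.sum_univ_three, Fin.prod_univ_three, habc] using hmax 3 (by norm_num) ![a, b, c] θ
    simpa [Fin.sum_univ_three] using sum_logDeriv_eq_zero_of_isMaxOn_prod hf_pos hf_diff _ hmax3
  have hlogDeriv : ∀ x, HasDerivAt (fun y => log (f y)) (logDeriv f x) x := fun x =>
    hasDerivAt_log_comp_logDeriv (hf_diff x) (hf_pos x).ne'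
  have hlinear := eq_mul_map_one_of_hasDerivAt_of_map_add hlogDeriv
    (map_add_of_map_add_add_eq_zero hscore)
  have hlog : ∀ x, HasDerivAt (fun y => log (f y)) (logDeriv f 1 * x) x := fun x => by
    simpa [hlinear x, mul_comm] using hlogDeriv x
  have hf : ∀ x, f x = f 0 * exp (-(-logDeriv f 1 / 2) * x ^ 2) := fun x => by
    rw [← exp_log (hf_pos x), eq_add_mul_sq_of_hasDerivAt hlog x, exp_add, exp_log (hf_pos 0)]
    ring_nf
  rw [integral_congr_ae (Filter.Eventually.of_forall hf)] at hf_norm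
  obtain ⟨σ, hσ, hgauss⟩ := exists_gaussian_of_integral_mul_exp_eq_one hf_norm
  exact ⟨σ, hσ, fun e => (hf e).trans (hgauss e)⟩
end

section
/- Let n ≥ 3 be a natural number and let φ : ℝ → ℝ be differentiable. Suppose that for all e₁, ..., eₙ ∈ ℝ with e₁ + e₂ + ⋯ + eₙ = 0 one has φ(e₁) + φ(e₂) + ⋯ + φ(eₙ) = 0. Then there exists a constant a ∈ ℝ such that φ(e) = a·e for all e ∈ ℝ. -/
/-!
Padding `x, y, z` with `n - 3` zeros turns the hypothesis into the three-term relation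
`φ x + φ y + φ z = 0` whenever `x + y + z = 0`. That relation forces `φ 0 = 0`, then oddness,
then additivity, and a continuous additive function on `ℝ` is linear.
-/

theorem map_zero_of_forall_sum_eq_zero {ι : Type*} [Fintype ι] [Nonempty ι] {φ : ℝ → ℝ}
    (h : ∀ e : ι → ℝ, (∑ i, e i) = 0 → (∑ i, φ (e i)) = 0) : φ 0 = 0 := by
  have hsum := h (fun _ => 0) (by simp)
  simpa [Finset.sum_const, Fintype.card_ne_zero] using hsum

theorem add_add_eq_zero_of_forall_sum_eq_zero {m : ℕ} {φ : ℝ → ℝ} (h0 : φ 0 = 0)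
    (h : ∀ e : Fin (3 + m) → ℝ, (∑ i, e i) = 0 → (∑ i, φ (e i)) = 0)
    {x y z : ℝ} (hxyz : x + y + z = 0) : φ x + φ y + φ z = 0 := by
  have hsum := h (Fin.append ![x, y, z] 0) <| by
    simpa [Fin.sum_univ_add, Fin.sum_univ_three] using hxyz
  simpa [Fin.sum_univ_add, Fin.sum_univ_three, h0] using hsum

theorem map_add_of_add_add_eq_zero {G : Type*} [AddCommGroup G] {φ : G → ℝ}
    (h : ∀ x y z : G, x + y + z = 0 → φ x + φ y + φ z = 0) (x y : G) :
    φ (x + y) = φ x + φ y := by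
  have h0 : φ 0 = 0 := by linarith [h 0 0 0 (by simp)]
  have hneg : φ (-(x + y)) = -φ (x + y) := by
    linarith [h (x + y) (-(x + y)) 0 (by simp)]
  linarith [h x y (-(x + y)) (by abel)]

theorem exists_eq_mul_of_continuous_of_map_add {φ : ℝ → ℝ} (hφ : Continuous φ)
    (hadd : ∀ x y, φ (x + y) = φ x + φ y) : ∃ a : ℝ, ∀ x : ℝ, φ x = a * x := by
  refine ⟨φ 1, fun x => ?_⟩
  have hsmul := map_real_smul (AddMonoidHom.mk' φ hadd) hφ x 1
  simpa [mul_comm] using hsmul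

/-- If `φ : ℝ → ℝ` is differentiable and `∑ i, φ (eᵢ) = 0` whenever `∑ i, eᵢ = 0`
(for a fixed number `n ≥ 3` of summands), then `φ` is linear through the origin. -/
theorem linear_of_sum_zero (n : ℕ) (hn : 3 ≤ n) (φ : ℝ → ℝ)
    (hφ : Differentiable ℝ φ)
    (h : ∀ e : Fin n → ℝ, (∑ i, e i) = 0 → (∑ i, φ (e i)) = 0) :
    ∃ a : ℝ, ∀ x : ℝ, φ x = a * x := by
  obtain ⟨m, rfl⟩ := Nat.exists_eq_add_of_le hn
  have : Nonempty (Fin (3 + m)) := ⟨0⟩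
  have h0 := map_zero_of_forall_sum_eq_zero h
  have hadd := map_add_of_add_add_eq_zero fun _ _ _ =>
    add_add_eq_zero_of_forall_sum_eq_zero h0 h
  exact exists_eq_mul_of_continuous_of_map_add hφ.continuous hadd
end

section
/- For all real numbers x > 0 and y > 0, the q-product x ⊗_q y tends to the ordinary product x·y as q → 1 (with q ranging over positive reals different from 1). -/
open Filter Topology Real

/-- The `q`-product: `x ⊗_q y = (x^(1-q) + y^(1-q) - 1)^(1/(1-q))` when `x > 0`, `y > 0`
and `x^(1-q) + y^(1-q) - 1 > 0`, else `0`. -/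
noncomputable def qmul (q x y : ℝ) : ℝ :=
  if 0 < x ∧ 0 < y ∧ 0 < x ^ (1 - q) + y ^ (1 - q) - 1 then
    (x ^ (1 - q) + y ^ (1 - q) - 1) ^ (1 / (1 - q))
  else 0

/-!
With `t = 1 - q` and `g t = x^t + y^t - 1`, the `q`-product is `g t ^ (1/t)` near `q = 1`.
Since `g 0 = 1` and `g' 0 = log x + log y`, this is a `(1 + d t + o(t))^(1/t)` limit,
which tends to `exp d = x * y`.
-/

theorem tendsto_rpow_one_div_of_hasDerivAt {g : ℝ → ℝ} {d : ℝ} (hg0 : g 0 = 1)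
    (hg : HasDerivAt g d 0) : Tendsto (fun t => g t ^ (1 / t)) (𝓝[≠] 0) (𝓝 (exp d)) := by
  have hlog : HasDerivAt (fun t => log (g t)) d 0 := by
    simpa [hg0] using hg.log (by simp [hg0])
  have hslope : Tendsto (fun t => log (g t) / t) (𝓝[≠] 0) (𝓝 d) := by
    refine (hasDerivAt_iff_tendsto_slope.mp hlog).congr' ?_
    filter_upwards [self_mem_nhdsWithin] with t ht
    simp [slope, hg0, div_eq_inv_mul]
  have hpos : ∀ᶠ t in 𝓝[≠] 0, 0 < g t :=
    (hg.continuousAt.eventually (lt_mem_nhds (by rw [hg0]; exact one_pos))).filter_mono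
      nhdsWithin_le_nhds
  refine ((continuous_exp.tendsto d).comp hslope).congr' ?_
  filter_upwards [hpos] with t ht
  rw [Function.comp_apply, rpow_def_of_pos ht, mul_one_div]

theorem hasDerivAt_rpow_add_rpow_sub_one {x y : ℝ} (hx : 0 < x) (hy : 0 < y) :
    HasDerivAt (fun t : ℝ => x ^ t + y ^ t - 1) (log x + log y) 0 := by
  simpa using ((hasStrictDerivAt_const_rpow hx (0 : ℝ)).hasDerivAt.add
    (hasStrictDerivAt_const_rpow hy (0 : ℝ)).hasDerivAt).sub_const 1

theorem tendsto_one_sub_nhdsNE_one : Tendsto (fun q : ℝ => 1 - q) (𝓝[≠] 1) (𝓝[≠] 0) := by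
  refine tendsto_nhdsWithin_of_tendsto_nhds_of_eventually_within _ ?_ ?_
  · exact ((continuous_sub_left (1 : ℝ)).tendsto' 1 0 (sub_self 1)).mono_left nhdsWithin_le_nhds
  · filter_upwards [self_mem_nhdsWithin] with q hq using sub_ne_zero.mpr (Ne.symm hq)

/-- For `x, y > 0`, the `q`-product `x ⊗_q y` tends to the ordinary product `x * y`
as `q → 1` along positive reals different from `1`. -/
theorem qmul_tendsto_mul (x y : ℝ) (hx : 0 < x) (hy : 0 < y) :
    Tendsto (fun q : ℝ => qmul q x y) (nhdsWithin 1 {q : ℝ | 0 < q ∧ q ≠ 1})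
      (nhds (x * y)) := by
  have hmap : Tendsto (fun q : ℝ => 1 - q) (𝓝[{q | 0 < q ∧ q ≠ 1}] 1) (𝓝[≠] 0) :=
    tendsto_one_sub_nhdsNE_one.mono_left (nhdsWithin_mono _ fun q hq => hq.2)
  have hlim := (tendsto_rpow_one_div_of_hasDerivAt (by simp)
    (hasDerivAt_rpow_add_rpow_sub_one hx hy)).comp hmap
  rw [exp_add, exp_log hx, exp_log hy] at hlim
  have hcont : Continuous fun q : ℝ => x ^ (1 - q) + y ^ (1 - q) - 1 := by
    fun_prop (disch := positivity)
  have hpos : ∀ᶠ q in 𝓝 (1 : ℝ), 0 < x ^ (1 - q) + y ^ (1 - q) - 1 :=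
    hcont.continuousAt.eventually (lt_mem_nhds (by simp))
  refine hlim.congr' ?_
  filter_upwards [hpos.filter_mono nhdsWithin_le_nhds] with q hq
  simp [qmul, hx, hy, hq]
end

section
/- Fix q > 1 and β > 0, and suppose Z := ∫_ℝ exp_q(−β u²) du is finite and positive. Define f(e) := exp_q(−β e²)/Z, which is positive for all e ∈ ℝ. Then for every n ≥ 1 and all x₁, ..., xₙ ∈ ℝ, the function g(θ) := Σ_{i=1}^n ln_q f(xᵢ − θ) is twice differentiable in θ and g″(θ) = −2 n β Z^{q−1} < 0 for all θ ∈ ℝ. -/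
open MeasureTheory

/-- The `q`-exponential: `exp_q x = (1 + (1-q)x)^(1/(1-q))` if `1 + (1-q)x > 0`, else `0`. -/
noncomputable def qexp (q x : ℝ) : ℝ :=
  if 0 < 1 + (1 - q) * x then (1 + (1 - q) * x) ^ (1 / (1 - q)) else 0

/-- The `q`-logarithm: `ln_q x = (x^(1-q) - 1)/(1-q)`. -/
noncomputable def qlog (q x : ℝ) : ℝ := (x ^ (1 - q) - 1) / (1 - q)

/-!
On the support of `exp_q`, `ln_q (exp_q x / Z)` is affine in `x` with slope `Z^(q-1)`, because
`(exp_q x)^(1-q) = 1 + (1-q)x`. For `q > 1` the argument `-β e²` always lies in that support, so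
the `q`-log-likelihood is the quadratic `∑ i, (c - β Z^(q-1) (xᵢ - θ)²)`, whose second
derivative is the constant `-2 n β Z^(q-1)`.
-/

theorem qlog_qexp_div {q x Z : ℝ} (hq : q ≠ 1) (hx : 0 < 1 + (1 - q) * x) (hZ : 0 < Z) :
    qlog q (qexp q x / Z) = (Z ^ (q - 1) - 1) / (1 - q) + Z ^ (q - 1) * x := by
  have hq' : 1 - q ≠ 0 := sub_ne_zero.mpr hq.symm
  have hZinv : Z ^ (1 - q) = (Z ^ (q - 1))⁻¹ := by
    rw [← Real.rpow_neg hZ.le, neg_sub]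
  have hZne : Z ^ (q - 1) ≠ 0 := (Real.rpow_pos_of_pos hZ _).ne'
  rw [qlog, qexp, if_pos hx, Real.div_rpow (Real.rpow_nonneg hx.le _) hZ.le,
    ← Real.rpow_mul hx.le, one_div_mul_cancel hq', Real.rpow_one, hZinv]
  field_simp
  ring

theorem one_add_one_sub_mul_neg_mul_sq_pos {q β : ℝ} (hq : 1 ≤ q) (hβ : 0 ≤ β) (e : ℝ) :
    0 < 1 + (1 - q) * (-β * e ^ 2) := by
  have : 0 ≤ (q - 1) * β * e ^ 2 := by positivity
  linarith

section Quadratic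

variable {ι : Type*} [Fintype ι] (c K : ℝ) (x : ι → ℝ)

theorem hasDerivAt_sum_const_sub_mul_sub_sq (θ : ℝ) :
    HasDerivAt (fun θ => ∑ i, (c - K * (x i - θ) ^ 2)) (∑ i, 2 * K * (x i - θ)) θ := by
  refine HasDerivAt.fun_sum fun i _ => ?_
  convert (((hasDerivAt_id' θ).const_sub (x i)).fun_pow 2 |>.const_mul K).const_sub c using 1
  ring

theorem deriv_sum_const_sub_mul_sub_sq :
    deriv (fun θ => ∑ i, (c - K * (x i - θ) ^ 2)) = fun θ => ∑ i, 2 * K * (x i - θ) :=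
  funext fun θ => (hasDerivAt_sum_const_sub_mul_sub_sq c K x θ).deriv

theorem hasDerivAt_deriv_sum_const_sub_mul_sub_sq (θ : ℝ) :
    HasDerivAt (deriv fun θ => ∑ i, (c - K * (x i - θ) ^ 2))
      (-2 * Fintype.card ι * K) θ := by
  rw [deriv_sum_const_sub_mul_sub_sq]
  refine (HasDerivAt.fun_sum fun i _ =>
    ((hasDerivAt_id' θ).const_sub (x i)).const_mul (2 * K)).congr_deriv ?_
  simp only [Finset.sum_const, Finset.card_univ, nsmul_eq_mul]
  ring

end Quadratic

theorem qloglikelihood_second_deriv_general (q β : ℝ) (hq : 1 < q) (hβ : 0 < β)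
    (hZpos : 0 < ∫ u : ℝ, qexp q (-β * u ^ 2))
    (n : ℕ) (hn : 1 ≤ n) (x : Fin n → ℝ) :
    (∀ θ : ℝ, DifferentiableAt ℝ
      (fun θ : ℝ => ∑ i, qlog q (qexp q (-β * (x i - θ) ^ 2) / ∫ u : ℝ, qexp q (-β * u ^ 2))) θ) ∧
    (∀ θ : ℝ, HasDerivAt
      (deriv (fun θ : ℝ =>
        ∑ i, qlog q (qexp q (-β * (x i - θ) ^ 2) / ∫ u : ℝ, qexp q (-β * u ^ 2))))
      (-2 * n * β * (∫ u : ℝ, qexp q (-β * u ^ 2)) ^ (q - 1)) θ) ∧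
    -2 * n * β * (∫ u : ℝ, qexp q (-β * u ^ 2)) ^ (q - 1) < 0 := by
  set Z := ∫ u : ℝ, qexp q (-β * u ^ 2)
  set c := (Z ^ (q - 1) - 1) / (1 - q)
  have hloglik : (fun θ => ∑ i, qlog q (qexp q (-β * (x i - θ) ^ 2) / Z))
      = fun θ => ∑ i, (c - β * Z ^ (q - 1) * (x i - θ) ^ 2) := by
    funext θ
    refine Finset.sum_congr rfl fun i _ => ?_
    rw [qlog_qexp_div hq.ne' (one_add_one_sub_mul_neg_mul_sq_pos hq.le hβ.le _) hZpos]
    ring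
  rw [hloglik]
  refine ⟨fun θ => (hasDerivAt_sum_const_sub_mul_sub_sq _ _ x θ).differentiableAt,
    fun θ => ?_, ?_⟩
  · convert hasDerivAt_deriv_sum_const_sub_mul_sub_sq c (β * Z ^ (q - 1)) x θ using 1
    rw [Fintype.card_fin]
    ring
  · have : 0 < 2 * (n : ℝ) * β * Z ^ (q - 1) := by
      have := Real.rpow_pos_of_pos hZpos (q - 1)
      have : (0 : ℝ) < n := Nat.cast_pos.mpr hn
      positivity
    linarith

/-- For the `q`-Gaussian density `f e = exp_q (-β e²) / Z` with `q > 1`, `β > 0` and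
`Z := ∫ exp_q (-β u²) du` finite and positive, the `q`-log-likelihood
`g θ = ∑ i, ln_q (f (xᵢ - θ))` is twice differentiable with constant negative second
derivative `g'' θ = -2 n β Z^(q-1) < 0`. -/
theorem qloglikelihood_second_deriv (q β : ℝ) (hq : 1 < q) (hβ : 0 < β)
    (hint : Integrable (fun u : ℝ => qexp q (-β * u ^ 2)))
    (hZpos : 0 < ∫ u : ℝ, qexp q (-β * u ^ 2))
    (n : ℕ) (hn : 1 ≤ n) (x : Fin n → ℝ) :
    (∀ θ : ℝ, DifferentiableAt ℝ
      (fun θ : ℝ => ∑ i, qlog q (qexp q (-β * (x i - θ) ^ 2) / ∫ u : ℝ, qexp q (-β * u ^ 2))) θ) ∧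
    (∀ θ : ℝ, HasDerivAt
      (deriv (fun θ : ℝ =>
        ∑ i, qlog q (qexp q (-β * (x i - θ) ^ 2) / ∫ u : ℝ, qexp q (-β * u ^ 2))))
      (-2 * n * β * (∫ u : ℝ, qexp q (-β * u ^ 2)) ^ (q - 1)) θ) ∧
    -2 * n * β * (∫ u : ℝ, qexp q (-β * u ^ 2)) ^ (q - 1) < 0 :=
  qloglikelihood_second_deriv_general q β hq hβ hZpos n hn x
end
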